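/- arXiv:2309.15809 — 5 statements merged into one kernel-verified Lean document; each statement's English description precedes it below -/
import Mathlib

section
/- Let E be a finite-dimensional real inner product space, let M ≥ 1, let G_1, …, G_M ∈ E, and define Q(P) = max_{1≤i≤M} ⟨G_i, P⟩ + (1/2)‖P‖². A point P* ∈ E minimizes Q over all of E if and only if there exist scalars μ_1, …, μ_M ≥ 0 with Σ_{i=1}^M μ_i = 1, with μ_i = 0 whenever ⟨G_i, P*⟩ < max_{1≤j≤M} ⟨G_j, P*⟩, and with P* = −Σ_{i=1}^M μ_i G_i. -/
open RealInnerProductSpace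

/-- Optimality characterization for the MF-CCA subproblem over the whole space:
`P*` minimizes `Q(P) = max_i ⟪G i, P⟫ + (1/2)‖P‖²` iff `P* = -∑ μ i • G i` for a
convex combination `μ` supported on the active indices. -/
theorem stmt_1 {E : Type*} [NormedAddCommGroup E] [InnerProductSpace ℝ E]
    [FiniteDimensional ℝ E] (M : ℕ) (hM : 1 ≤ M) (G : Fin M → E) (Q : E → ℝ)
    (hQ : ∀ P : E, Q P =
      (Finset.univ.sup' ⟨⟨0, hM⟩, Finset.mem_univ _⟩ fun i => ⟪G i, P⟫) +
        (1 / 2) * ‖P‖ ^ 2)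
    (Pstar : E) :
    (∀ P : E, Q Pstar ≤ Q P) ↔
      ∃ μ : Fin M → ℝ, (∀ i, 0 ≤ μ i) ∧ (∑ i, μ i = 1) ∧
        (∀ i, ⟪G i, Pstar⟫ <
            (Finset.univ.sup' ⟨⟨0, hM⟩, Finset.mem_univ _⟩ fun j => ⟪G j, Pstar⟫) →
          μ i = 0) ∧
        Pstar = -∑ i, μ i • G i := by
  classical
  have ne : (Finset.univ : Finset (Fin M)).Nonempty := ⟨⟨0, hM⟩, Finset.mem_univ _⟩
  set m : ℝ := Finset.univ.sup' ⟨⟨0, hM⟩, Finset.mem_univ _⟩ (fun j => ⟪G j, Pstar⟫) with hm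
  have hle : ∀ i, ⟪G i, Pstar⟫ ≤ m := fun i => by
    rw [hm]; exact Finset.le_sup' (fun j => ⟪G j, Pstar⟫) (Finset.mem_univ i)
  constructor
  · -- hard direction
    intro hmin
    set A : Finset (Fin M) := Finset.univ.filter (fun i => ⟪G i, Pstar⟫ = m) with hA
    have hQP : Q Pstar = m + (1/2) * ‖Pstar‖^2 := hQ Pstar
    -- key claim: -Pstar lies in the convex hull of the active gradients
    have key : -Pstar ∈ convexHull ℝ (((A.image G) : Finset E) : Set E) := by
      by_contra hnot
      obtain ⟨f, u, hfu, huf⟩ := geometric_hahn_banach_closed_point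
        (convex_convexHull ℝ _) ((A.image G).finite_toSet.isClosed_convexHull (𝕜 := ℝ)) hnot
      set d : E := (InnerProductSpace.toDual ℝ E).symm f with hd
      have hdf : ∀ x : E, ⟪d, x⟫ = f x := fun x => InnerProductSpace.toDual_symm_apply
      have hactive : ∀ i ∈ A, ⟪G i, d⟫ + ⟪Pstar, d⟫ < 0 := by
        intro i hi
        have h1 : f (G i) < u := hfu _ (subset_convexHull ℝ _ (by
          simp only [Finset.coe_image, Set.mem_image, Finset.mem_coe]
          exact ⟨i, hi, rfl⟩))
        have h2 : u < f (-Pstar) := huf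
        have h3 : f (-Pstar) = -f Pstar := by simp
        have e1 : ⟪G i, d⟫ = f (G i) := by rw [real_inner_comm]; exact hdf _
        have e2 : ⟪Pstar, d⟫ = f Pstar := by rw [real_inner_comm]; exact hdf _
        rw [e1, e2]
        linarith
      -- for every index there is a small step size making its term strictly smaller
      have step : ∀ i : Fin M, ∃ t : ℝ, 0 < t ∧ ∀ s : ℝ, 0 < s → s < t →
          ⟪G i, Pstar + s • d⟫ + (1/2) * ‖Pstar + s • d‖^2 < Q Pstar := by
        intro i
        set c : ℝ := ⟪G i, d⟫ + ⟪Pstar, d⟫ with hc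
        have expand : ∀ s : ℝ, ⟪G i, Pstar + s • d⟫ + (1/2) * ‖Pstar + s • d‖^2 =
            ⟪G i, Pstar⟫ + (1/2) * ‖Pstar‖^2 + s * c + s^2 * (1/2) * ‖d‖^2 := by
          intro s
          have h1 : ‖Pstar + s • d‖^2 = ‖Pstar‖^2 + 2*⟪Pstar, s • d⟫ + ‖s • d‖^2 := by
            have := @norm_add_sq_real E _ _ Pstar (s • d); linarith
          have h2 : ⟪Pstar, s • d⟫ = s * ⟪Pstar, d⟫ := real_inner_smul_right _ _ _
          have h3 : ‖s • d‖^2 = s^2 * ‖d‖^2 := by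
            rw [norm_smul]; simp [mul_pow, sq_abs]
          have h4 : ⟪G i, Pstar + s • d⟫ = ⟪G i, Pstar⟫ + s * ⟪G i, d⟫ := by
            rw [inner_add_right, real_inner_smul_right]
          rw [h1, h2, h3, h4, hc]; ring
        by_cases hiA : i ∈ A
        · -- active: gap is zero, slope c is negative
          have hce : ⟪G i, Pstar⟫ = m := by
            simpa [hA] using hiA
          have hcneg : c < 0 := hactive i hiA
          refine ⟨(-c) / (‖d‖^2 + 1), div_pos (by linarith) (by positivity), fun s hs hst => ?_⟩
          rw [expand s, hQP, hce]
          have hd2 : (0:ℝ) ≤ ‖d‖^2 := by positivity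
          have : s * (‖d‖^2 + 1) < -c := by
            have := (lt_div_iff₀ (by positivity : (0:ℝ) < ‖d‖^2 + 1)).mp hst
            linarith
          nlinarith [mul_pos hs hs, sq_nonneg s]
        · -- inactive: there is a strictly positive gap
          have hgap : ⟪G i, Pstar⟫ < m := by
            rcases lt_or_eq_of_le (hle i) with h | h
            · exact h
            · exact absurd (by simp [hA, h]) hiA
          set gap : ℝ := m - ⟪G i, Pstar⟫ with hgapdef
          have hgappos : 0 < gap := by simp [hgapdef]; linarith
          refine ⟨min 1 (gap / (|c| + ‖d‖^2 + 1)), lt_min one_pos (by positivity),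
            fun s hs hst => ?_⟩
          rw [expand s, hQP]
          have hs1 : s < 1 := lt_of_lt_of_le hst (min_le_left _ _)
          have hs2 : s < gap / (|c| + ‖d‖^2 + 1) := lt_of_lt_of_le hst (min_le_right _ _)
          have hs3 : s * (|c| + ‖d‖^2 + 1) < gap := by
            have hpos : (0:ℝ) < |c| + ‖d‖^2 + 1 := by positivity
            calc s * (|c| + ‖d‖^2 + 1) < gap / (|c| + ‖d‖^2 + 1) * (|c| + ‖d‖^2 + 1) := by
                  exact mul_lt_mul_of_pos_right hs2 hpos
              _ = gap := div_mul_cancel₀ _ (ne_of_gt hpos)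
          have habs : c ≤ |c| := le_abs_self c
          have hd2 : (0:ℝ) ≤ ‖d‖^2 := by positivity
          nlinarith [sq_nonneg s, mul_pos hs hs, mul_le_of_le_one_left (le_of_lt hs) (le_of_lt hs1)]
      choose t ht hts using step
      set T : ℝ := Finset.univ.inf' ne t with hT
      have hTpos : 0 < T := by
        rw [hT, Finset.lt_inf'_iff]
        exact fun i _ => ht i
      set s : ℝ := T / 2 with hs
      have hspos : 0 < s := by positivity
      have hsT : ∀ i : Fin M, s < t i := fun i =>
        lt_of_lt_of_le (by linarith : s < T) (Finset.inf'_le _ (Finset.mem_univ i))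
      have hcontr : Q (Pstar + s • d) < Q Pstar := by
        rw [hQ (Pstar + s • d)]
        have hsup : (Finset.univ.sup' ⟨⟨0, hM⟩, Finset.mem_univ _⟩
            fun i => ⟪G i, Pstar + s • d⟫) < Q Pstar - (1/2) * ‖Pstar + s • d‖^2 := by
          refine (Finset.sup'_lt_iff _).mpr ?_
          intro i _
          have := hts i s hspos (hsT i)
          linarith
        linarith
      exact absurd (hmin (Pstar + s • d)) (not_le.mpr hcontr)
    -- extract the convex combination from the hull membership
    rw [Finset.mem_convexHull'] at key
    obtain ⟨w, hw0, hw1, hwsum⟩ := key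
    have hAne : A.Nonempty := by
      obtain ⟨i, _, hi⟩ := Finset.exists_mem_eq_sup' ne (fun j => ⟪G j, Pstar⟫)
      exact ⟨i, by simp [hA, ← hi, hm]⟩
    -- pick a representative index for each active gradient value
    have hrep : ∀ y ∈ A.image G, ∃ i ∈ A, G i = y := by
      intro y hy
      simpa using Finset.mem_image.mp hy
    classical
    set rep : E → Fin M := fun y =>
      if h : ∃ i ∈ A, G i = y then h.choose else ⟨0, hM⟩ with hrepdef
    have hrepA : ∀ y ∈ A.image G, rep y ∈ A ∧ G (rep y) = y := by
      intro y hy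
      have h : ∃ i ∈ A, G i = y := hrep y hy
      simp only [hrepdef, dif_pos h]
      exact ⟨h.choose_spec.1, h.choose_spec.2⟩
    set μ : Fin M → ℝ := fun j => ∑ y ∈ (A.image G).filter (fun y => rep y = j), w y
      with hμ
    refine ⟨μ, ?_, ?_, ?_, ?_⟩
    · intro j
      exact Finset.sum_nonneg fun y hy => hw0 y (Finset.mem_of_mem_filter y hy)
    · rw [hμ]
      rw [Finset.sum_fiberwise_of_maps_to (fun y _ => Finset.mem_univ (rep y)) w]
      exact hw1
    · intro j hj
      have hjA : j ∉ A := by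
        simp only [hA, Finset.mem_filter, Finset.mem_univ, true_and]
        exact ne_of_lt hj
      rw [hμ]
      apply Finset.sum_eq_zero
      intro y hy
      rcases Finset.mem_filter.mp hy with ⟨hy1, hy2⟩
      exact absurd (hy2 ▸ (hrepA y hy1).1) hjA
    · have : ∑ j, μ j • G j = ∑ y ∈ A.image G, w y • y := by
        rw [hμ]
        have h1 : ∀ j : Fin M, (∑ y ∈ (A.image G).filter (fun y => rep y = j), w y) • G j =
            ∑ y ∈ (A.image G).filter (fun y => rep y = j), w y • y := by
          intro j
          rw [Finset.sum_smul]
          apply Finset.sum_congr rfl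
          intro y hy
          rcases Finset.mem_filter.mp hy with ⟨hy1, hy2⟩
          rw [← hy2, (hrepA y hy1).2]
        simp_rw [h1]
        exact Finset.sum_fiberwise_of_maps_to (fun y _ => Finset.mem_univ (rep y)) _
      rw [this, hwsum, neg_neg]
  · -- easy direction
    rintro ⟨μ, hμ0, hμ1, hμsupp, hPs⟩ P
    have hsum : ∑ i, μ i • G i = -Pstar := by rw [hPs, neg_neg]
    -- the weighted average of the active inner products equals the max
    have hwavg : ∀ R : E, ⟪∑ i, μ i • G i, R⟫ = ∑ i, μ i * ⟪G i, R⟫ := by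
      intro R; rw [sum_inner]; simp [real_inner_smul_left]
    have hmval : ∑ i, μ i * ⟪G i, Pstar⟫ = m := by
      have : ∀ i : Fin M, μ i * ⟪G i, Pstar⟫ = μ i * m := by
        intro i
        rcases lt_or_eq_of_le (hle i) with h | h
        · rw [hμsupp i h]; ring
        · rw [h]
      rw [Finset.sum_congr rfl (fun i _ => this i), ← Finset.sum_mul, hμ1, one_mul]
    have hmPs : m = -‖Pstar‖^2 := by
      have h1 : ⟪∑ i, μ i • G i, Pstar⟫ = -‖Pstar‖^2 := by
        rw [hsum, inner_neg_left, real_inner_self_eq_norm_sq]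
      rw [← hmval, ← hwavg, h1]
    have hQPs : Q Pstar = -(1/2) * ‖Pstar‖^2 := by
      rw [hQ Pstar, ← hm, hmPs]; ring
    rw [hQ P, hQPs]
    have hsupge : ∑ i, μ i * ⟪G i, P⟫ ≤
        Finset.univ.sup' ⟨⟨0, hM⟩, Finset.mem_univ _⟩ (fun i => ⟪G i, P⟫) := by
      calc ∑ i, μ i * ⟪G i, P⟫
          ≤ ∑ i, μ i * (Finset.univ.sup' ⟨⟨0, hM⟩, Finset.mem_univ _⟩ (fun i => ⟪G i, P⟫)) := by
            apply Finset.sum_le_sum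
            intro i _
            exact mul_le_mul_of_nonneg_left (Finset.le_sup' (fun j => ⟪G j, P⟫) (Finset.mem_univ i)) (hμ0 i)
        _ = _ := by rw [← Finset.sum_mul, hμ1, one_mul]
    have hinner : ∑ i, μ i * ⟪G i, P⟫ = -⟪Pstar, P⟫ := by
      rw [← hwavg, hsum, inner_neg_left]
    have hnorm : ‖P - Pstar‖^2 = ‖P‖^2 - 2*⟪P, Pstar⟫ + ‖Pstar‖^2 := by
      have := @norm_sub_sq_real E _ _ P Pstar; linarith
    have hcomm : ⟪P, Pstar⟫ = ⟪Pstar, P⟫ := real_inner_comm _ _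
    nlinarith [sq_nonneg ‖P - Pstar‖, hnorm]
end

section
/- Let E be a finite-dimensional real inner product space, T ⊆ E a linear subspace, M ≥ 1, G_1, …, G_M ∈ E, and let P* ∈ T be the minimizer of Q(P) = max_{1≤i≤M} ⟨G_i, P⟩ + (1/2)‖P‖² over T. Then max_{1≤i≤M} ⟨G_i, P*⟩ = −‖P*‖²; consequently ⟨G_i, P*⟩ ≤ −‖P*‖² for every i ∈ {1, …, M}. -/
open RealInnerProductSpace Filter

/-!
The max of linear forms is positively homogeneous, so for `c ≥ 0`
`Q (c • P*) = c · max_i ⟪G i, P*⟫ + (c² / 2) ‖P*‖²`. This quadratic in `c` is minimal at the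
interior point `c = 1`, hence its derivative `max_i ⟪G i, P*⟫ + ‖P*‖²` vanishes there.
-/

theorem Finset.sup'_inner_smul_of_nonneg {ι E : Type*} [NormedAddCommGroup E]
    [InnerProductSpace ℝ E] (s : Finset ι) (hs : s.Nonempty) (G : ι → E) (P : E) {c : ℝ}
    (hc : 0 ≤ c) :
    (s.sup' hs fun i => ⟪G i, c • P⟫) = c * s.sup' hs fun i => ⟪G i, P⟫ := by
  simp only [real_inner_smul_right, Finset.mul₀_sup' hc]

theorem eq_neg_norm_sq_of_le_along_ray {E : Type*} [NormedAddCommGroup E] [NormedSpace ℝ E]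
    (ℓ : E → ℝ) (P : E) (hℓ : ∀ c : ℝ, 0 ≤ c → ℓ (c • P) = c * ℓ P)
    (hmin : ∀ c : ℝ, 0 ≤ c → ℓ P + 1 / 2 * ‖P‖ ^ 2 ≤ ℓ (c • P) + 1 / 2 * ‖c • P‖ ^ 2) :
    ℓ P = -‖P‖ ^ 2 := by
  set φ : ℝ → ℝ := fun c => c * ℓ P + 1 / 2 * c ^ 2 * ‖P‖ ^ 2
  have hlocal : IsLocalMin φ 1 := by
    filter_upwards [Ioi_mem_nhds zero_lt_one] with c hc
    have h := hmin c (le_of_lt hc)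
    rw [hℓ c (le_of_lt hc), norm_smul, Real.norm_of_nonneg (le_of_lt hc)] at h
    simp only [φ]
    linarith
  have hderiv : HasDerivAt φ (ℓ P + ‖P‖ ^ 2) 1 :=
    (((hasDerivAt_id' (1 : ℝ)).mul_const (ℓ P)).add
      (((hasDerivAt_pow 2 (1 : ℝ)).const_mul (1 / 2)).mul_const (‖P‖ ^ 2))).congr_deriv
      (by norm_num)
  linarith [hlocal.hasDerivAt_eq_zero hderiv]

theorem stmt_2_general {E : Type*} [NormedAddCommGroup E] [InnerProductSpace ℝ E]
    (T : Submodule ℝ E) (M : ℕ) (hM : 1 ≤ M)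
    (G : Fin M → E) (Q : E → ℝ)
    (hQ : ∀ P : E, Q P =
      (Finset.univ.sup' ⟨⟨0, hM⟩, Finset.mem_univ _⟩ fun i => ⟪G i, P⟫) +
        (1 / 2) * ‖P‖ ^ 2)
    (Pstar : E) (hmem : Pstar ∈ T) (hmin : ∀ P ∈ T, Q Pstar ≤ Q P) :
    (Finset.univ.sup' ⟨⟨0, hM⟩, Finset.mem_univ _⟩ fun i => ⟪G i, Pstar⟫) =
        -‖Pstar‖ ^ 2 ∧
      ∀ i, ⟪G i, Pstar⟫ ≤ -‖Pstar‖ ^ 2 := by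
  have hmax := eq_neg_norm_sq_of_le_along_ray
    (fun P => Finset.univ.sup' ⟨⟨0, hM⟩, Finset.mem_univ _⟩ fun i => ⟪G i, P⟫) Pstar
    (fun c hc => Finset.sup'_inner_smul_of_nonneg _ _ G Pstar hc)
    (fun c _ => by simpa only [hQ] using hmin (c • Pstar) (T.smul_mem c hmem))
  exact ⟨hmax, fun i => hmax ▸ Finset.le_sup' (fun i => ⟪G i, Pstar⟫) (Finset.mem_univ i)⟩

/-- At the minimizer `P*` of `Q(P) = max_i ⟪G i, P⟫ + (1/2)‖P‖²` over the subspace `T`,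
`max_i ⟪G i, P*⟫ = -‖P*‖²` and hence `⟪G i, P*⟫ ≤ -‖P*‖²` for every `i`. -/
theorem stmt_2 {E : Type*} [NormedAddCommGroup E] [InnerProductSpace ℝ E]
    [FiniteDimensional ℝ E] (T : Submodule ℝ E) (M : ℕ) (hM : 1 ≤ M)
    (G : Fin M → E) (Q : E → ℝ)
    (hQ : ∀ P : E, Q P =
      (Finset.univ.sup' ⟨⟨0, hM⟩, Finset.mem_univ _⟩ fun i => ⟪G i, P⟫) +
        (1 / 2) * ‖P‖ ^ 2)
    (Pstar : E) (hmem : Pstar ∈ T) (hmin : ∀ P ∈ T, Q Pstar ≤ Q P) :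
    (Finset.univ.sup' ⟨⟨0, hM⟩, Finset.mem_univ _⟩ fun i => ⟪G i, Pstar⟫) =
        -‖Pstar‖ ^ 2 ∧
      ∀ i, ⟪G i, Pstar⟫ ≤ -‖Pstar‖ ^ 2 :=
  stmt_2_general T M hM G Q hQ Pstar hmem hmin
end

section
/- Let E be a finite-dimensional real inner product space, T ⊆ E a linear subspace, M ≥ 1, G_1, …, G_M ∈ E, and let P* ∈ T be the minimizer of Q(P) = max_{1≤i≤M} ⟨G_i, P⟩ + (1/2)‖P‖² over T. Then P* = 0 if and only if there is no P ∈ T such that ⟨G_i, P⟩ < 0 for every i ∈ {1, …, M} (equivalently, P* = 0 iff max_{1≤i≤M} ⟨G_i, P⟩ ≥ 0 for every P ∈ T). -/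
open RealInnerProductSpace

/-- The steepest descent direction (minimizer of `Q` over the subspace `T`) vanishes
iff there is no common descent direction in `T`, i.e. no `P ∈ T` with `⟪G i, P⟫ < 0`
for every `i`. -/
theorem stmt_3 {E : Type*} [NormedAddCommGroup E] [InnerProductSpace ℝ E]
    [FiniteDimensional ℝ E] (T : Submodule ℝ E) (M : ℕ) (hM : 1 ≤ M)
    (G : Fin M → E) (Q : E → ℝ)
    (hQ : ∀ P : E, Q P =
      (Finset.univ.sup' ⟨⟨0, hM⟩, Finset.mem_univ _⟩ fun i => ⟪G i, P⟫) +
        (1 / 2) * ‖P‖ ^ 2)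
    (Pstar : E) (hmem : Pstar ∈ T) (hmin : ∀ P ∈ T, Q Pstar ≤ Q P) :
    Pstar = 0 ↔ ¬∃ P ∈ T, ∀ i, ⟪G i, P⟫ < 0 := by
  have hQ0 : Q 0 = 0 := by
    rw [hQ]
    simp [inner_zero_right]
    exact le_antisymm (by apply Finset.sup'_le; intros; exact le_rfl) (Finset.le_sup' (fun _ => (0:ℝ)) (Finset.mem_univ ⟨0, hM⟩))
  constructor
  · rintro rfl ⟨P, hPT, hP⟩
    have hP0 : P ≠ 0 := by
      intro h
      have := hP ⟨0, hM⟩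
      rw [h, inner_zero_right] at this
      linarith
    set m := Finset.univ.sup' ⟨⟨0, hM⟩, Finset.mem_univ _⟩ (fun i => ⟪G i, P⟫) with hm
    have hmlt : m < 0 := by
      rw [hm]; apply (Finset.sup'_lt_iff (H := _)).mpr
      intro i _
      exact hP i
    have hn : (0:ℝ) < ‖P‖ ^ 2 := by
      have := norm_pos_iff.mpr hP0
      positivity
    set t : ℝ := -m / ‖P‖ ^ 2 with htdef
    have ht : 0 < t := by
      apply div_pos (by linarith) hn
    have hsup : (Finset.univ.sup' ⟨⟨0, hM⟩, Finset.mem_univ _⟩ fun i => ⟪G i, t • P⟫) ≤ t * m := by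
      apply Finset.sup'_le
      intro i _
      rw [real_inner_smul_right]
      exact mul_le_mul_of_nonneg_left (Finset.le_sup' (fun i => ⟪G i, P⟫) (Finset.mem_univ i)) ht.le
    have hnorm : ‖t • P‖ ^ 2 = t ^ 2 * ‖P‖ ^ 2 := by
      rw [norm_smul, mul_pow, Real.norm_eq_abs, sq_abs]
    have hQt : Q (t • P) ≤ t * m + (1 / 2) * (t ^ 2 * ‖P‖ ^ 2) := by
      rw [hQ, hnorm]
      linarith
    have hmin' := hmin (t • P) (T.smul_mem t hPT)
    rw [hQ0] at hmin'
    have hval : t * m + (1 / 2) * (t ^ 2 * ‖P‖ ^ 2) < 0 := by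
      have heq : t * m + (1 / 2) * (t ^ 2 * ‖P‖ ^ 2) = -(1 / 2) * m ^ 2 / ‖P‖ ^ 2 := by
        rw [htdef]; field_simp; ring
      rw [heq]
      apply div_neg_of_neg_of_pos _ hn
      nlinarith
    linarith
  · intro h
    by_contra hne
    have h1 := hmin 0 T.zero_mem
    rw [hQ0] at h1
    rw [hQ] at h1
    apply h
    refine ⟨Pstar, hmem, fun i => ?_⟩
    have hle := Finset.le_sup' (fun i => ⟪G i, Pstar⟫) (Finset.mem_univ i)
    have hpos : 0 < ‖Pstar‖ ^ 2 := by
      have := norm_pos_iff.mpr hne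
      positivity
    nlinarith [h1, hle]
end

section
/- Let E be a finite-dimensional real inner product space, T ⊆ E a linear subspace, M ≥ 1, and let f_1, …, f_M : E → ℝ be differentiable, each with L-Lipschitz gradient for a common constant L ≥ 0. Fix x ∈ E and let P* ∈ T be the minimizer over T of Q(P) = max_{1≤i≤M} ⟨∇f_i(x), P⟩ + (1/2)‖P‖². Then for every η ≥ 0 and every i ∈ {1, …, M}, f_i(x + ηP*) ≤ f_i(x) + (L η²/2 − η)‖P*‖². -/
open RealInnerProductSpace

lemma descentLemma {E : Type*} [NormedAddCommGroup E] [InnerProductSpace ℝ E] [CompleteSpace E]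
    (f : E → ℝ) (f' : E → E) (L : ℝ) (hL : 0 ≤ L)
    (hdiff : ∀ x, HasGradientAt f (f' x) x)
    (hlip : ∀ x y, ‖f' x - f' y‖ ≤ L * ‖x - y‖)
    (x v : E) : f (x + v) ≤ f x + ⟪f' x, v⟫ + L / 2 * ‖v‖ ^ 2 := by
  set g : ℝ → ℝ := fun t => f (x + t • v) - t * ⟪f' x, v⟫ - L * t ^ 2 / 2 * ‖v‖ ^ 2 with hg
  have hg' : ∀ t : ℝ, HasDerivAt g (⟪f' (x + t • v), v⟫ - ⟪f' x, v⟫ - L * t * ‖v‖ ^ 2) t := by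
    intro t
    have hline : HasDerivAt (fun t : ℝ => x + t • v) v t := by
      simpa using ((hasDerivAt_id t).smul_const v).const_add x
    have h1 : HasDerivAt (fun t : ℝ => f (x + t • v)) ⟪f' (x + t • v), v⟫ t := by
      have := ((hdiff (x + t • v)).hasFDerivAt).comp_hasDerivAt t hline
      simp [InnerProductSpace.toDual_apply_apply] at this; exact this
    have h2 : HasDerivAt (fun t : ℝ => t * ⟪f' x, v⟫) ⟪f' x, v⟫ t := by
      simpa using (hasDerivAt_id t).mul_const (⟪f' x, v⟫)
    have h3 : HasDerivAt (fun t : ℝ => L * t ^ 2 / 2 * ‖v‖ ^ 2) (L * t * ‖v‖ ^ 2) t := by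
      have h4 : HasDerivAt (fun t : ℝ => t ^ 2) (2 * t) t := by
        simpa using hasDerivAt_pow 2 t
      have := ((h4.const_mul L).div_const 2).mul_const (‖v‖ ^ 2)
      refine this.congr_deriv ?_; ring
    exact (h1.sub h2).sub h3
  have hanti : AntitoneOn g (Set.Icc (0:ℝ) 1) := by
    apply antitoneOn_of_deriv_nonpos (convex_Icc (0:ℝ) 1)
    · exact fun t _ => (hg' t).differentiableAt.continuousAt.continuousWithinAt
    · exact fun t _ => (hg' t).differentiableAt.differentiableWithinAt
    · intro t ht
      rw [interior_Icc] at ht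
      rw [(hg' t).deriv]
      have h1 : ⟪f' (x + t • v), v⟫ - ⟪f' x, v⟫ = ⟪f' (x + t • v) - f' x, v⟫ := by
        rw [inner_sub_left]
      have h2 : ⟪f' (x + t • v) - f' x, v⟫ ≤ ‖f' (x + t • v) - f' x‖ * ‖v‖ :=
        real_inner_le_norm _ _
      have h3 : ‖f' (x + t • v) - f' x‖ ≤ L * (t * ‖v‖) := by
        have := hlip (x + t • v) x
        simpa [norm_smul, abs_of_pos ht.1, mul_assoc] using this
      nlinarith [norm_nonneg v, mul_le_mul_of_nonneg_right h3 (norm_nonneg v)]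
  have key := hanti (Set.left_mem_Icc.2 one_pos.le) (Set.right_mem_Icc.2 one_pos.le) one_pos.le
  simp only [hg] at key
  simp only [one_smul, zero_smul, add_zero] at key
  nlinarith [key]

/-- Descent property of the MF-CCA steepest descent direction: along the minimizer `P*`
of `Q(P) = max_i ⟪∇f_i(x), P⟫ + (1/2)‖P‖²` over the subspace `T`, every objective
satisfies `f_i(x + ηP*) ≤ f_i(x) + (Lη²/2 − η)‖P*‖²`. -/
theorem stmt_5 {E : Type*} [NormedAddCommGroup E] [InnerProductSpace ℝ E]
    [FiniteDimensional ℝ E] (T : Submodule ℝ E) (M : ℕ) (hM : 1 ≤ M)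
    (f : Fin M → E → ℝ) (f' : Fin M → E → E) (L : ℝ) (hL : 0 ≤ L)
    (hdiff : ∀ i x, HasGradientAt (f i) (f' i x) x)
    (hlip : ∀ i x y, ‖f' i x - f' i y‖ ≤ L * ‖x - y‖)
    (x : E) (Pstar : E) (hmem : Pstar ∈ T)
    (hmin : ∀ P ∈ T,
      (Finset.univ.sup' ⟨⟨0, hM⟩, Finset.mem_univ _⟩ fun i => ⟪f' i x, Pstar⟫) +
          (1 / 2) * ‖Pstar‖ ^ 2 ≤
        (Finset.univ.sup' ⟨⟨0, hM⟩, Finset.mem_univ _⟩ fun i => ⟪f' i x, P⟫) +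
          (1 / 2) * ‖P‖ ^ 2) :
    ∀ η : ℝ, 0 ≤ η → ∀ i,
      f i (x + η • Pstar) ≤ f i x + (L * η ^ 2 / 2 - η) * ‖Pstar‖ ^ 2 := by
  have ne : (Finset.univ : Finset (Fin M)).Nonempty := ⟨⟨0, hM⟩, Finset.mem_univ _⟩
  set S : ℝ := Finset.univ.sup' ne fun i => ⟪f' i x, Pstar⟫ with hS
  set s : ℝ := ‖Pstar‖ ^ 2 with hs
  have hs0 : 0 ≤ s := by positivity
  -- scaling: for t ≥ 0, sup' of ⟪f' i x, t • Pstar⟫ = t * S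
  have hscale : ∀ t : ℝ, 0 ≤ t →
      (Finset.univ.sup' ne fun i => ⟪f' i x, t • Pstar⟫) = t * S := by
    intro t ht
    have : (fun i : Fin M => ⟪f' i x, t • Pstar⟫) = fun i => t * ⟪f' i x, Pstar⟫ := by
      funext i; rw [real_inner_smul_right]
    rw [this, hS]
    exact (Finset.comp_sup'_eq_sup'_comp ne _ (fun a b => by
      exact mul_max_of_nonneg a b ht)).symm
  -- key: S ≤ -s
  have hkey : S ≤ -s := by
    have hineq : ∀ t : ℝ, 0 ≤ t → S + (1/2) * s ≤ t * S + (1/2) * (t ^ 2 * s) := by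
      intro t ht
      have := hmin (t • Pstar) (T.smul_mem t hmem)
      rw [hscale t ht] at this
      simpa [norm_smul, mul_pow, abs_of_nonneg ht, hs] using this
    have h2 : ∀ ε : ℝ, 0 < ε → ε ≤ 1 → S + s ≤ ε * s / 2 := by
      intro ε hε hε1
      have := hineq (1 - ε) (by linarith)
      nlinarith
    rcases eq_or_lt_of_le hs0 with h | h
    · have := h2 1 one_pos le_rfl; linarith [this, h.symm]
    · have : S + s ≤ 0 := by
        by_contra hcon
        push_neg at hcon
        set ε := min 1 ((S + s) / s) with hε
        have hεpos : 0 < ε := lt_min one_pos (div_pos hcon h)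
        have := h2 ε hεpos (min_le_left _ _)
        have hεle : ε * s ≤ S + s := by
          calc ε * s ≤ ((S + s) / s) * s := by
                exact mul_le_mul_of_nonneg_right (min_le_right _ _) hs0
            _ = S + s := by field_simp
        nlinarith
      linarith
  intro η hη i
  have hdesc := descentLemma (f i) (f' i) L hL (hdiff i) (hlip i) x (η • Pstar)
  have hin : ⟪f' i x, Pstar⟫ ≤ S := Finset.le_sup' (fun j => ⟪f' j x, Pstar⟫) (Finset.mem_univ i)
  have : ⟪f' i x, η • Pstar⟫ ≤ η * (-s) := by
    rw [real_inner_smul_right]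
    exact le_trans (mul_le_mul_of_nonneg_left (le_trans hin hkey) hη) le_rfl
  have hnorm : ‖η • Pstar‖ ^ 2 = η ^ 2 * s := by
    rw [norm_smul, mul_pow, hs]; simp [abs_of_nonneg hη]
  nlinarith [hdesc]
end

section
/- Let D ≥ R ≥ 1, let B be a real D×D matrix, let Ū be a real D×R matrix with ŪᵀŪ = I_R, let V̄ and Q be real R×R orthogonal matrices (V̄V̄ᵀ = I_R and QQᵀ = QᵀQ = I_R), and let Λ be a real R×R diagonal matrix with strictly positive diagonal entries λ_1, …, λ_R such that Q Λ Qᵀ = Ūᵀ B Ū. Let Λ^{−1/2} denote the diagonal matrix with entries λ_r^{−1/2}, and set Z = Ū (Q Λ^{−1/2} Qᵀ) V̄ᵀ. Then Zᵀ B Z = I_R; that is, Z lies on the generalized Stiefel manifold St(D, R, B) = { Z ∈ ℝ^{D×R} : Zᵀ B Z = I_R }. -/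
open Matrix

set_option maxHeartbeats 1000000 in
/-- The generalized polar decomposition retraction output
`Z = Ū (Q Λ^{−1/2} Qᵀ) V̄ᵀ` lies on the generalized Stiefel manifold
`St(D, R, B) = { Z : Zᵀ B Z = I }`. -/
theorem stmt_14 (D R : ℕ) (hR : 1 ≤ R) (hDR : R ≤ D)
    (B : Matrix (Fin D) (Fin D) ℝ)
    (Ubar : Matrix (Fin D) (Fin R) ℝ) (hUbar : Ubarᵀ * Ubar = 1)
    (Vbar Qm : Matrix (Fin R) (Fin R) ℝ)
    (hVbar : Vbar * Vbarᵀ = 1) (hQ1 : Qm * Qmᵀ = 1) (hQ2 : Qmᵀ * Qm = 1)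
    (lam : Fin R → ℝ) (hlam : ∀ r, 0 < lam r)
    (hQL : Qm * Matrix.diagonal lam * Qmᵀ = Ubarᵀ * B * Ubar)
    (Z : Matrix (Fin D) (Fin R) ℝ)
    (hZ : Z = Ubar * (Qm * Matrix.diagonal (fun r => (Real.sqrt (lam r))⁻¹) * Qmᵀ) * Vbarᵀ) :
    Zᵀ * B * Z = 1 := by
  set S := Matrix.diagonal (fun r => (Real.sqrt (lam r))⁻¹) with hS
  have hdiag : S * Matrix.diagonal lam * S = 1 := by
    rw [hS, Matrix.diagonal_mul_diagonal, Matrix.diagonal_mul_diagonal, ← Matrix.diagonal_one,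
      Matrix.diagonal_eq_diagonal_iff]
    intro i
    have h1 : Real.sqrt (lam i) ≠ 0 := ne_of_gt (Real.sqrt_pos.mpr (hlam i))
    have h2 : Real.sqrt (lam i) * Real.sqrt (lam i) = lam i :=
      Real.mul_self_sqrt (hlam i).le
    rw [← h2]
    field_simp
    rw [Real.sq_sqrt (sq_nonneg (Real.sqrt (lam i)))]
  have key : Zᵀ * B * Z
      = Vbar * (Qm * S * Qmᵀ) * (Ubarᵀ * B * Ubar) * (Qm * S * Qmᵀ) * Vbarᵀ := by
    rw [hZ]
    simp only [Matrix.transpose_mul, Matrix.transpose_transpose, Matrix.mul_assoc]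
    congr 2
    rw [Matrix.diagonal_transpose]
  rw [key, ← hQL]
  have : Qm * S * Qmᵀ * (Qm * Matrix.diagonal lam * Qmᵀ) * (Qm * S * Qmᵀ) = 1 := by
    calc Qm * S * Qmᵀ * (Qm * Matrix.diagonal lam * Qmᵀ) * (Qm * S * Qmᵀ)
        = Qm * (S * ((Qmᵀ * Qm) * (Matrix.diagonal lam * ((Qmᵀ * Qm) * (S * Qmᵀ))))) := by
          simp only [Matrix.mul_assoc]
      _ = Qm * (S * Matrix.diagonal lam * S) * Qmᵀ := by
          rw [hQ2]; simp only [Matrix.one_mul, Matrix.mul_assoc]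
      _ = 1 := by rw [hdiag, Matrix.mul_one, hQ1]
  calc Vbar * (Qm * S * Qmᵀ) * (Qm * Matrix.diagonal lam * Qmᵀ) * (Qm * S * Qmᵀ) * Vbarᵀ
      = Vbar * (Qm * S * Qmᵀ * (Qm * Matrix.diagonal lam * Qmᵀ) * (Qm * S * Qmᵀ)) * Vbarᵀ := by
        simp only [Matrix.mul_assoc]
    _ = 1 := by rw [this, Matrix.mul_one, hVbar]
end
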